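/- arXiv:2507.17970 — 2 statements merged into one kernel-verified Lean document; each statement's English description precedes it below -/
import Mathlib

section
/- Let m ≥ 1 and let (T_p)_{p ∈ ℤ} be a family of finite-dimensional complex vector spaces equipped with linear maps f : T_p → T_{p+m}, Δ : T_{p+m} → T_p, and θ : T_p → T_p for all p, such that (θ - p) is nilpotent on T_p, and on each T_p one has fΔ = ∏_{j=0}^{m-1}(θ/m + 2j) and Δf = ∏_{j=0}^{m-1}(θ/m + 2j + 1) (as endomorphisms of the appropriate spaces). Then for every integer p not divisible by m, the maps f : T_p → T_{p+m} and Δ : T_{p+m} → T_p are bijective. -/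
/-!
On `T p` the operator `θ` has the single eigenvalue `p`, so every factor `θ / m + c` of `fΔ`
and `Δf` has the single eigenvalue `p / m + c`, which is nonzero when `m ∤ p`. Hence both
composites are invertible, which forces `f` and `Δ` to be bijective.
-/

theorem isUnit_smul_add_smul_one_of_isNilpotent {K A : Type*} [Field K] [Ring A] [Algebra K A]
    {θ : A} {c : K} (hθ : IsNilpotent (θ - c • 1)) {a b : K} (hab : a * c + b ≠ 0) :
    IsUnit (a • θ + b • (1 : A)) := by
  have hsplit : a • θ + b • (1 : A) = a • (θ - c • 1) + algebraMap K A (a * c + b) := by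
    rw [Algebra.algebraMap_eq_smul_one, smul_sub, add_smul, mul_smul]
    abel
  rw [hsplit]
  exact (hθ.smul a).isUnit_add_right_of_commute ((isUnit_iff_ne_zero.mpr hab).map _)
    (Algebra.commutes _ _).symm

theorem inv_mul_add_natCast_ne_zero {m : ℕ} (hm : m ≠ 0) {p : ℤ} (hp : ¬ (m : ℤ) ∣ p) (c : ℕ) :
    (m : ℂ)⁻¹ * p + c ≠ 0 := by
  intro h
  have hp_eq : (p : ℂ) = ((-c * m : ℤ) : ℂ) := by
    push_cast
    field_simp at h
    linear_combination h
  exact hp ⟨-c, by rw [Int.cast_inj.mp hp_eq]; ring⟩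

theorem isUnit_prod_range_inv_smul_add_natCast_smul_one {M : Type*} [AddCommGroup M]
    [Module ℂ M] {m : ℕ} {p : ℤ} (hp : ¬ (m : ℤ) ∣ p) {θ : Module.End ℂ M}
    (hθ : IsNilpotent (θ - (p : ℂ) • 1)) (g : ℕ → ℕ) :
    IsUnit ((List.range m).map (fun j => (m : ℂ)⁻¹ • θ + (g j : ℂ) • 1)).prod := by
  refine List.prod_isUnit fun u hu => ?_
  obtain ⟨j, hj, rfl⟩ := List.mem_map.mp hu
  have hm : m ≠ 0 := Nat.ne_zero_of_lt (List.mem_range.mp hj)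
  exact isUnit_smul_add_smul_one_of_isNilpotent hθ (inv_mul_add_natCast_ne_zero hm hp (g j))

theorem LinearMap.bijective_of_isUnit_comp {R M N : Type*} [Semiring R] [AddCommMonoid M]
    [AddCommMonoid N] [Module R M] [Module R N] {f : M →ₗ[R] N} {g : N →ₗ[R] M}
    (hgf : IsUnit (g ∘ₗ f)) (hfg : IsUnit (f ∘ₗ g)) :
    Function.Bijective f ∧ Function.Bijective g := by
  have hgf' : Function.Bijective (g ∘ f) := (Module.End.isUnit_iff _).mp hgf
  have hfg' : Function.Bijective (f ∘ g) := (Module.End.isUnit_iff _).mp hfg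
  exact ⟨⟨hgf'.1.of_comp, hfg'.2.of_comp⟩, ⟨hfg'.1.of_comp, hgf'.2.of_comp⟩⟩

theorem stmt_9_general (m : ℕ)
    (T : ℤ → Type*) [∀ p, AddCommGroup (T p)] [∀ p, Module ℂ (T p)]
    (f : ∀ p : ℤ, T p →ₗ[ℂ] T (p + m))
    (Δ : ∀ p : ℤ, T (p + m) →ₗ[ℂ] T p)
    (θ : ∀ p : ℤ, Module.End ℂ (T p))
    (hnil : ∀ p : ℤ, IsNilpotent (θ p - (p : ℂ) • (1 : Module.End ℂ (T p))))
    (hfΔ : ∀ p : ℤ, (f p ∘ₗ Δ p : Module.End ℂ (T (p + m))) =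
      ((List.range m).map
        (fun j => (m : ℂ)⁻¹ • θ (p + m) + ((2 * j : ℕ) : ℂ) • 1)).prod)
    (hΔf : ∀ p : ℤ, (Δ p ∘ₗ f p : Module.End ℂ (T p)) =
      ((List.range m).map
        (fun j => (m : ℂ)⁻¹ • θ p + ((2 * j + 1 : ℕ) : ℂ) • 1)).prod) :
    ∀ p : ℤ, ¬ ((m : ℤ) ∣ p) →
      Function.Bijective (f p) ∧ Function.Bijective (Δ p) := by
  intro p hp
  have hp_add : ¬ (m : ℤ) ∣ p + m := fun h => hp ((Int.dvd_add_left dvd_rfl).mp h)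
  have hΔf_unit : IsUnit (Δ p ∘ₗ f p) := by
    rw [hΔf p]
    exact isUnit_prod_range_inv_smul_add_natCast_smul_one hp (hnil p) (fun j => 2 * j + 1)
  have hfΔ_unit : IsUnit (f p ∘ₗ Δ p) := by
    rw [hfΔ p]
    exact isUnit_prod_range_inv_smul_add_natCast_smul_one hp_add
      (by exact_mod_cast hnil (p + m)) (fun j => 2 * j)
  exact LinearMap.bijective_of_isUnit_comp hΔf_unit hfΔ_unit

theorem stmt_9 (m : ℕ) (hm : 1 ≤ m)
    (T : ℤ → Type*) [∀ p, AddCommGroup (T p)] [∀ p, Module ℂ (T p)]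
    [∀ p, FiniteDimensional ℂ (T p)]
    (f : ∀ p : ℤ, T p →ₗ[ℂ] T (p + m))
    (Δ : ∀ p : ℤ, T (p + m) →ₗ[ℂ] T p)
    (θ : ∀ p : ℤ, Module.End ℂ (T p))
    (hnil : ∀ p : ℤ, IsNilpotent (θ p - (p : ℂ) • (1 : Module.End ℂ (T p))))
    (hfΔ : ∀ p : ℤ, (f p ∘ₗ Δ p : Module.End ℂ (T (p + m))) =
      ((List.range m).map
        (fun j => (m : ℂ)⁻¹ • θ (p + m) + ((2 * j : ℕ) : ℂ) • 1)).prod)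
    (hΔf : ∀ p : ℤ, (Δ p ∘ₗ f p : Module.End ℂ (T p)) =
      ((List.range m).map
        (fun j => (m : ℂ)⁻¹ • θ p + ((2 * j + 1 : ℕ) : ℂ) • 1)).prod) :
    ∀ p : ℤ, ¬ ((m : ℤ) ∣ p) →
      Function.Bijective (f p) ∧ Function.Bijective (Δ p) :=
  stmt_9_general m T f Δ θ hnil hfΔ hΔf
end

section
/- With the same graded data as before (maps f : T_p → T_{p+m}, Δ : T_{p+m} → T_p, θ with (θ - p) nilpotent on T_p, and relations fΔ = ∏_{j=0}^{m-1}(θ/m + 2j), Δf = ∏_{j=0}^{m-1}(θ/m + 2j + 1) on the appropriate spaces), for every integer k ≥ 0 the map f : T_{mk} → T_{m(k+1)} is bijective; consequently f^k gives an isomorphism T_0 ≅ T_{mk} for all k ≥ 0. -/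
lemma aux_isUnit {V : Type*} [AddCommGroup V] [Module ℂ V]
    (a : Module.End ℂ V) (c : ℂ) (hc : c ≠ 0)
    (h : IsNilpotent (a - c • (1 : Module.End ℂ V))) : IsUnit a := by
  have hu : IsUnit (c • (1 : Module.End ℂ V)) := by
    rw [← Algebra.algebraMap_eq_smul_one]
    exact (hc.isUnit).map (algebraMap ℂ (Module.End ℂ V))
  have := h.isUnit_add_right_of_commute hu ((Commute.one_right _).smul_right c)
  simpa using this

theorem stmt_10 (m : ℕ) (hm : 1 ≤ m)
    (T : ℤ → Type*) [∀ p, AddCommGroup (T p)] [∀ p, Module ℂ (T p)]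
    [∀ p, FiniteDimensional ℂ (T p)]
    (f : ∀ p : ℤ, T p →ₗ[ℂ] T (p + m))
    (Δ : ∀ p : ℤ, T (p + m) →ₗ[ℂ] T p)
    (θ : ∀ p : ℤ, Module.End ℂ (T p))
    (hnil : ∀ p : ℤ, IsNilpotent (θ p - (p : ℂ) • (1 : Module.End ℂ (T p))))
    (hfΔ : ∀ p : ℤ, (f p ∘ₗ Δ p : Module.End ℂ (T (p + m))) =
      ((List.range m).map
        (fun j => (m : ℂ)⁻¹ • θ (p + m) + ((2 * j : ℕ) : ℂ) • 1)).prod)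
    (hΔf : ∀ p : ℤ, (Δ p ∘ₗ f p : Module.End ℂ (T p)) =
      ((List.range m).map
        (fun j => (m : ℂ)⁻¹ • θ p + ((2 * j + 1 : ℕ) : ℂ) • 1)).prod) :
    (∀ k : ℕ, Function.Bijective (f ((m : ℤ) * k))) ∧
    (∀ k : ℕ, Nonempty (T 0 ≃ₗ[ℂ] T ((m : ℤ) * k))) := by
  have hm0 : (m : ℂ) ≠ 0 := Nat.cast_ne_zero.mpr (Nat.one_le_iff_ne_zero.mp hm)
  -- each factor is a unit when the "eigenvalue" is nonzero
  have factor : ∀ (p : ℤ) (d : ℕ), (m : ℂ)⁻¹ * (p : ℂ) + (d : ℂ) ≠ 0 →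
      IsUnit ((m : ℂ)⁻¹ • θ p + ((d : ℕ) : ℂ) • (1 : Module.End ℂ (T p))) := by
    intro p d hne
    apply aux_isUnit _ ((m : ℂ)⁻¹ * (p : ℂ) + (d : ℂ)) hne
    have heq : (m : ℂ)⁻¹ • θ p + ((d : ℕ) : ℂ) • (1 : Module.End ℂ (T p)) -
        ((m : ℂ)⁻¹ * (p : ℂ) + (d : ℂ)) • (1 : Module.End ℂ (T p)) =
        (m : ℂ)⁻¹ • (θ p - (p : ℂ) • (1 : Module.End ℂ (T p))) := by
      rw [smul_sub, smul_smul, add_smul]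
      abel
    rw [heq]
    exact (hnil p).smul _
  have bij : ∀ k : ℕ, Function.Bijective (f ((m : ℤ) * k)) := by
    intro k
    set p : ℤ := (m : ℤ) * k with hp
    constructor
    · -- injectivity from Δ ∘ f being a unit
      have h1 : IsUnit (Δ p ∘ₗ f p : Module.End ℂ (T p)) := by
        rw [hΔf p]
        apply List.prod_isUnit
        intro x hx
        simp only [List.mem_map, List.mem_range] at hx
        obtain ⟨j, hj, rfl⟩ := hx
        apply factor
        have h : ((k + (2 * j + 1) : ℕ) : ℂ) ≠ 0 := Nat.cast_ne_zero.mpr (by omega)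
        push_cast at h ⊢
        rw [hp]
        push_cast
        rw [inv_mul_cancel_left₀ hm0]
        convert h using 1
      have hb := (Module.End.isUnit_iff _).mp h1
      have := hb.injective
      rw [LinearMap.coe_comp] at this
      exact this.of_comp
    · -- surjectivity from f ∘ Δ being a unit
      have h2 : IsUnit (f p ∘ₗ Δ p : Module.End ℂ (T (p + m))) := by
        rw [hfΔ p]
        apply List.prod_isUnit
        intro x hx
        simp only [List.mem_map, List.mem_range] at hx
        obtain ⟨j, hj, rfl⟩ := hx
        apply factor
        have h : ((k + 1 + 2 * j : ℕ) : ℂ) ≠ 0 := Nat.cast_ne_zero.mpr (by omega)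
        push_cast at h ⊢
        rw [hp]
        push_cast
        rw [show (m : ℂ) * (k : ℂ) + (m : ℂ) = (m : ℂ) * ((k : ℂ) + 1) by ring,
          inv_mul_cancel_left₀ hm0]
        convert h using 1
      have hb := (Module.End.isUnit_iff _).mp h2
      have := hb.surjective
      rw [LinearMap.coe_comp] at this
      exact this.of_comp
  refine ⟨bij, fun k => ?_⟩
  have castE : ∀ a b : ℤ, a = b → (T a ≃ₗ[ℂ] T b) := by
    intro a b h
    subst h
    exact LinearEquiv.refl ℂ (T a)
  induction k with
  | zero => exact ⟨castE 0 ((m : ℤ) * (0 : ℕ)) (by push_cast; ring)⟩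
  | succ n ih =>
    obtain ⟨e⟩ := ih
    exact ⟨e.trans ((LinearEquiv.ofBijective (f ((m : ℤ) * n)) (bij n)).trans
      (castE _ _ (by push_cast; ring)))⟩
end
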